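/- arXiv:2309.01747 — 2 statements merged into one kernel-verified Lean document; each statement's English description precedes it below -/
import Mathlib

section
/- (Rank Lemma for deletion.) Let w ∈ S_{n-1} have vector (r_1, ..., r_{n-1}) and let w' ∈ S_{n-2} be the permutation with vector (r_2, ..., r_{n-1}). Then the matrix A_{w'} is obtained from A_w by deleting the first row and the (r_1+1)-st column. Moreover, for any S ⊆ {2, ..., n}: rk((A_{w'})_{S,j}) = rk((A_w)_{S,j}) for j ≤ r_1, and rk((A_{w'})_{S,j}) = rk((A_w)_{S,j+1}) for j ≥ r_1 (with columns of A_{w'} to the right of the deleted column reindexed by shifting left by one). -/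
/-!
The vector condition says that `w⁻¹ 1, …, w⁻¹ m` has the same rank vector as `w'⁻¹`. An injective
sequence is determined by its range and its rank vector, so this sequence is `w'⁻¹` followed by
the order embedding `Fin.succAbove (w⁻¹ 0)` skipping `w⁻¹ 0`. Hence every star in a row `i + 1`
of `A_w` lies in the column obtained from the corresponding star in row `i` of `A_{w'}` by
skipping the column `(w⁻¹ 0).succ = r₁` (0-based). That column therefore vanishes below the
first row, and deleting a column that is zero on the chosen rows does not change the rank.
-/

/-- `rvecS w j`: the rank of `w⁻¹ j` counted from the smallest among
`w⁻¹ j, ..., w⁻¹ (m-1)` (0-based indexing); this is the convention under which the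
first row of `A_w` has its stars in columns `r_1` and `r_1 + 1` (1-based). -/
def rvecS {m : ℕ} (w : Equiv.Perm (Fin m)) (j : Fin m) : ℕ :=
  (Finset.univ.filter (fun k : Fin m => j ≤ k ∧ w⁻¹ k ≤ w⁻¹ j)).card

/-- The column (0-based) of the distinguished entry `⋆₂` in row `i` of `A_w`:
column `w⁻¹(i) + 1` (1-based) for `i ≤ n - 1`, and column `1` for the last row. -/
def star2 {m : ℕ} (w : Equiv.Perm (Fin m)) (i : Fin (m + 1)) : Fin (m + 1) :=
  if h : (i : ℕ) < m then Fin.succ (w⁻¹ ⟨(i : ℕ), h⟩) else 0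

/-- The column (0-based) of the entry `⋆₁` in row `i` of `A_w`: the rightmost column
to the left of the `⋆₂`-column of row `i` containing no `⋆₂` in any earlier row. -/
def star1col {m : ℕ} (w : Equiv.Perm (Fin m)) (i : Fin (m + 1)) : ℕ :=
  ((Finset.range (star2 w i : ℕ)).filter
    (fun c => ∀ i' : Fin (m + 1), i' < i → (star2 w i' : ℕ) ≠ c)).sup id

/-- The support (pattern of possibly-nonzero entries) of the matrix `A_w`. -/
def AwSupp {m : ℕ} (w : Equiv.Perm (Fin m)) (i c : Fin (m + 1)) : Prop :=
  c = star2 w i ∨ ((i : ℕ) < m ∧ (c : ℕ) = star1col w i)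

/-- The rank of the submatrix of `A` on rows `S` and the first `j` columns. -/
noncomputable def rkSub {n : ℕ} (A : Matrix (Fin n) (Fin n) ℂ) (S : Finset (Fin n))
    (j : ℕ) : ℕ :=
  (Matrix.of (fun (i : {i : Fin n // i ∈ S}) (k : {k : Fin n // (k : ℕ) < j}) =>
    A i.1 k.1)).rank

/-- The matrix obtained from `A` by deleting the first row and the column with
0-based index `r1` (1-based index `r1 + 1`), reindexing later columns. -/
def delMat {m : ℕ} (r1 : ℕ) (A : Matrix (Fin (m + 2)) (Fin (m + 2)) ℂ) :
    Matrix (Fin (m + 1)) (Fin (m + 1)) ℂ :=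
  Matrix.of fun i c => A i.succ (if (c : ℕ) < r1 then c.castSucc else c.succ)

open Finset Function

section RankVector

variable {M : ℕ} {α : Type*} [LinearOrder α]

def rankVec (f : Fin M → α) (j : Fin M) : ℕ :=
  #{k | j ≤ k ∧ f k ≤ f j}

lemma rankVec_eq_card_filter_image {f : Fin M → α} (hf : Injective f) (j : Fin M) :
    rankVec f j = #(((Ici j).image f).filter (· ≤ f j)) := by
  rw [filter_image, card_image_of_injective _ hf, rankVec]
  congr 1
  ext k
  simp

lemma rankVec_comp_strictMono {β : Type*} [LinearOrder β] {e : α → β} (he : StrictMono e)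
    (f : Fin M → α) : rankVec (e ∘ f) = rankVec f := by
  funext j
  simp [rankVec, he.le_iff_le]

lemma rankVec_comp_succ (f : Fin (M + 1) → α) (j : Fin M) :
    rankVec (f ∘ Fin.succ) j = rankVec f j.succ := by
  simp [rankVec, Fin.card_filter_univ_succ, Fin.succ_le_succ_iff]

lemma strictMonoOn_card_filter_le (s : Finset α) :
    StrictMonoOn (fun t => #(s.filter (· ≤ t))) s := by
  intro x _ y hy hxy
  apply card_lt_card
  rw [ssubset_iff_of_subset (monotone_filter_right s fun _ _ h => h.trans hxy.le)]
  exact ⟨y, mem_filter.2 ⟨hy, le_rfl⟩, fun h => (mem_filter.1 h).2.not_gt hxy⟩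

lemma image_Ici_subset_image_Ici {f g : Fin M → α} {j : Fin M} (hg : Injective g)
    (hgf : Set.range g ⊆ Set.range f) (hfg : ∀ k < j, f k = g k) :
    (Ici j).image g ⊆ (Ici j).image f := by
  intro x hx
  obtain ⟨k, hk, rfl⟩ := mem_image.1 hx
  obtain ⟨k', hk'⟩ := hgf ⟨k, rfl⟩
  refine mem_image.2 ⟨k', mem_Ici.2 (not_lt.1 fun hlt => ?_), hk'⟩
  rw [hfg k' hlt] at hk'
  exact (mem_Ici.1 hk).not_gt (hg hk' ▸ hlt)

/-- Once `f` and `g` agree below `j`, they take the same values on `Ici j`, and `f j`, `g j` are the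
elements of that set with the same rank. -/
theorem eq_of_rankVec_eq {f g : Fin M → α} (hf : Injective f) (hg : Injective g)
    (hfg : Set.range f = Set.range g) (h : rankVec f = rankVec g) : f = g := by
  funext j
  induction j using WellFoundedLT.induction with
  | ind j ih =>
    have htail : (Ici j).image f = (Ici j).image g :=
      subset_antisymm (image_Ici_subset_image_Ici hf hfg.le fun k hk => (ih k hk).symm)
        (image_Ici_subset_image_Ici hg hfg.ge ih)
    have hfj : f j ∈ (Ici j).image f := mem_image_of_mem f (mem_Ici.2 le_rfl)
    have hgj : g j ∈ (Ici j).image f := htail ▸ mem_image_of_mem g (mem_Ici.2 le_rfl)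
    refine (strictMonoOn_card_filter_le _).injOn hfj hgj ?_
    rw [← rankVec_eq_card_filter_image hf, h, rankVec_eq_card_filter_image hg, htail]

end RankVector

def succAboveNat (p c : ℕ) : ℕ :=
  if c < p then c else c + 1

lemma Fin.val_succAbove_eq_succAboveNat {n : ℕ} (p : Fin (n + 1)) (c : Fin n) :
    (p.succAbove c : ℕ) = succAboveNat p c := by
  unfold succAboveNat Fin.succAbove
  split_ifs <;> simp_all [Fin.lt_def]

lemma succAboveNat_strictMono (p : ℕ) : StrictMono (succAboveNat p) := by
  intro x y hxy
  unfold succAboveNat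
  split_ifs <;> omega

lemma succAboveNat_ne (p c : ℕ) : succAboveNat p c ≠ p := by
  unfold succAboveNat
  split_ifs <;> omega

lemma exists_succAboveNat_eq {p c : ℕ} (h : c ≠ p) : ∃ c', succAboveNat p c' = c :=
  ⟨if c < p then c else c - 1, by unfold succAboveNat; split_ifs <;> omega⟩

lemma succAboveNat_lt_iff_of_le {p c j : ℕ} (h : j ≤ p) : succAboveNat p c < j ↔ c < j := by
  unfold succAboveNat
  split_ifs <;> omega

lemma succAboveNat_lt_add_one_iff_of_le {p c j : ℕ} (h : p ≤ j) :
    succAboveNat p c < j + 1 ↔ c < j := by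
  unfold succAboveNat
  split_ifs <;> omega

lemma succAboveNat_sup {p : ℕ} (hp : 0 < p) (s : Finset ℕ) :
    (s.image (succAboveNat p)).sup id = succAboveNat p (s.sup id) := by
  rw [sup_image, apply_sup_eq_sup_comp (succAboveNat p)
    (fun _ _ => (succAboveNat_strictMono p).monotone.map_max) (by simp [succAboveNat, hp])]
  rfl

section Deletion

variable {m : ℕ}

lemma rvecS_eq_rankVec (w : Equiv.Perm (Fin m)) : rvecS w = rankVec ⇑w⁻¹ := rfl

lemma rvecS_zero (w : Equiv.Perm (Fin (m + 1))) : rvecS w 0 = (w⁻¹ 0 : ℕ) + 1 := by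
  rw [rvecS, ← Fin.card_Iic]
  refine card_equiv w⁻¹ fun k => ?_
  simp

theorem inv_comp_succ_eq_succAbove {w : Equiv.Perm (Fin (m + 1))} {w' : Equiv.Perm (Fin m)}
    (hww' : ∀ j, rvecS w' j = rvecS w j.succ) :
    ⇑w⁻¹ ∘ Fin.succ = (w⁻¹ 0).succAbove ∘ ⇑w'⁻¹ := by
  refine eq_of_rankVec_eq ((w⁻¹).injective.comp (Fin.succ_injective _))
    (Fin.succAbove_right_injective.comp (w'⁻¹).injective) ?_ ?_
  · rw [Set.range_comp, Fin.range_succ, (w'⁻¹).surjective.range_comp, Fin.range_succAbove,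
      Set.image_compl_eq (w⁻¹).bijective, Set.image_singleton]
  · funext j
    rw [rankVec_comp_strictMono (Fin.strictMono_succAbove _), rankVec_comp_succ,
      ← rvecS_eq_rankVec, ← rvecS_eq_rankVec, hww']

lemma star2_zero (w : Equiv.Perm (Fin (m + 1))) : star2 w 0 = (w⁻¹ 0).succ := by
  simp [star2]

variable {w : Equiv.Perm (Fin (m + 1))} {w' : Equiv.Perm (Fin m)}

lemma star2_succ (hw : ⇑w⁻¹ ∘ Fin.succ = (w⁻¹ 0).succAbove ∘ ⇑w'⁻¹) (i : Fin (m + 1)) :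
    star2 w i.succ = (w⁻¹ 0).succ.succAbove (star2 w' i) := by
  unfold star2
  by_cases hi : (i : ℕ) < m
  · rw [dif_pos (by simpa using hi), dif_pos hi]
    have hrow : (⟨(i.succ : ℕ), by simpa using hi⟩ : Fin (m + 1)) = (⟨i, hi⟩ : Fin m).succ :=
      Fin.ext (by simp)
    rw [hrow, ← comp_apply (f := ⇑w⁻¹), hw, comp_apply, Fin.succ_succAbove_succ]
  · rw [dif_neg (by simpa using hi), dif_neg hi, Fin.succAbove_ne_zero_zero (Fin.succ_ne_zero _)]

lemma star1col_succ (hw : ⇑w⁻¹ ∘ Fin.succ = (w⁻¹ 0).succAbove ∘ ⇑w'⁻¹) (i : Fin (m + 1)) :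
    star1col w i.succ = succAboveNat (w⁻¹ 0).succ (star1col w' i) := by
  have hset : (range (star2 w i.succ)).filter (fun c => ∀ i' < i.succ, (star2 w i' : ℕ) ≠ c)
      = ((range (star2 w' i)).filter (fun c => ∀ i' < i, (star2 w' i' : ℕ) ≠ c)).image
        (succAboveNat (w⁻¹ 0).succ) := by
    ext c
    simp only [mem_filter, mem_range, mem_image]
    rw [Fin.forall_fin_succ]
    simp only [Fin.succ_pos, Fin.succ_lt_succ_iff, star2_zero, star2_succ hw,
      Fin.val_succAbove_eq_succAboveNat, forall_const]
    constructor
    · rintro ⟨hlt, hne, hall⟩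
      obtain ⟨c, rfl⟩ := exists_succAboveNat_eq (Ne.symm hne)
      exact ⟨c, ⟨(succAboveNat_strictMono _).lt_iff_lt.1 hlt,
        fun i' hi' h => hall i' hi' (congrArg _ h)⟩, rfl⟩
    · rintro ⟨c, ⟨hlt, hall⟩, rfl⟩
      exact ⟨succAboveNat_strictMono _ hlt, (succAboveNat_ne _ _).symm,
        fun i' hi' h => hall i' hi' ((succAboveNat_strictMono _).injective h)⟩
  rw [star1col, star1col, hset, succAboveNat_sup (Fin.succ_pos _)]

lemma awSupp_succ_succAbove_iff (hw : ⇑w⁻¹ ∘ Fin.succ = (w⁻¹ 0).succAbove ∘ ⇑w'⁻¹)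
    (i c : Fin (m + 1)) :
    AwSupp w i.succ ((w⁻¹ 0).succ.succAbove c) ↔ AwSupp w' i c := by
  rw [AwSupp, AwSupp, star2_succ hw, Fin.succAbove_right_inj, Fin.val_succAbove_eq_succAboveNat,
    star1col_succ hw, (succAboveNat_strictMono _).injective.eq_iff]
  simp

lemma not_awSupp_succ (hw : ⇑w⁻¹ ∘ Fin.succ = (w⁻¹ 0).succAbove ∘ ⇑w'⁻¹) (i : Fin (m + 1)) :
    ¬ AwSupp w i.succ (w⁻¹ 0).succ := by
  rw [AwSupp, star2_succ hw, star1col_succ hw]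
  rintro (h | ⟨-, h⟩)
  · exact Fin.succAbove_ne _ _ h.symm
  · exact succAboveNat_ne _ _ h.symm

end Deletion

lemma Matrix.rank_submatrix_of_forall_notMem_range {R : Type*} [CommSemiring R]
    {l m n o : Type*} [Fintype m] [Fintype n] [Fintype o] (M : Matrix m n R) (e : l ≃ m)
    (f : o → n) (hf : ∀ k ∉ Set.range f, ∀ i, M i k = 0) :
    (M.submatrix e f).rank = M.rank := by
  have hspan : Submodule.span R (Set.range (M.submatrix id f).col)
      = Submodule.span R (Set.range M.col) := by
    refine le_antisymm (Submodule.span_mono ?_) (Submodule.span_le.2 ?_)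
    · rintro _ ⟨k, rfl⟩
      exact ⟨f k, rfl⟩
    · rintro _ ⟨k, rfl⟩
      by_cases hk : k ∈ Set.range f
      · obtain ⟨k', rfl⟩ := hk
        exact Submodule.subset_span ⟨k', rfl⟩
      · rw [show M.col k = 0 from funext (hf k hk)]
        exact zero_mem _
  calc (M.submatrix e f).rank = ((M.submatrix id f).submatrix e (Equiv.refl o)).rank := rfl
    _ = (M.submatrix id f).rank := rank_submatrix _ _ _
    _ = M.rank := by rw [rank_eq_finrank_span_cols, rank_eq_finrank_span_cols, hspan]

lemma delMat_apply {m : ℕ} (p : Fin (m + 2)) (A : Matrix (Fin (m + 2)) (Fin (m + 2)) ℂ)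
    (i c : Fin (m + 1)) : delMat p A i c = A i.succ (p.succAbove c) := by
  simp only [delMat, Matrix.of_apply, Fin.succAbove, Fin.lt_def, Fin.val_castSucc]

lemma rkSub_delMat {m : ℕ} (p : Fin (m + 2)) (A : Matrix (Fin (m + 2)) (Fin (m + 2)) ℂ)
    (hA : ∀ i : Fin (m + 1), A i.succ p = 0) (S : Finset (Fin (m + 1))) {j j' : ℕ}
    (hjj' : ∀ c : Fin (m + 1), (c : ℕ) < j ↔ (p.succAbove c : ℕ) < j') :
    rkSub (delMat p A) S j = rkSub A (S.image Fin.succ) j' := by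
  let rows : {i // i ∈ S} ≃ {i // i ∈ S.image Fin.succ} :=
    Equiv.ofBijective (fun i => ⟨i.1.succ, mem_image_of_mem _ i.2⟩)
      ⟨fun _ _ h => Subtype.ext (Fin.succ_injective _ (congrArg Subtype.val h)), fun i => by
        obtain ⟨i', hi', hi⟩ := mem_image.1 i.2
        exact ⟨⟨i', hi'⟩, Subtype.ext hi⟩⟩
  let cols : {k : Fin (m + 1) // (k : ℕ) < j} → {k : Fin (m + 2) // (k : ℕ) < j'} :=
    fun k => ⟨p.succAbove k, (hjj' k).1 k.2⟩
  have hmat : Matrix.of (fun (i : {i // i ∈ S}) (k : {k : Fin (m + 1) // (k : ℕ) < j}) =>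
      delMat p A i.1 k.1) = (Matrix.of fun (i : {i // i ∈ S.image Fin.succ})
        (k : {k : Fin (m + 2) // (k : ℕ) < j'}) => A i.1 k.1).submatrix rows cols := by
    ext i k
    exact delMat_apply p A i k
  rw [rkSub, rkSub, hmat]
  refine Matrix.rank_submatrix_of_forall_notMem_range _ rows cols fun k hk i => ?_
  obtain rfl : k.1 = p := by
    by_contra hne
    obtain ⟨c, hc⟩ := Fin.exists_succAbove_eq hne
    exact hk ⟨⟨c, (hjj' c).2 (hc ▸ k.2)⟩, Subtype.ext hc⟩
  obtain ⟨i', -, hi'⟩ := mem_image.1 i.2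
  change A i.1 k.1 = 0
  rw [← hi']
  exact hA i'

/-- Rank lemma for deletion: if `w' ∈ S_{n-2}` has vector `(r_2, …, r_{n-1})`, then
`A_{w'}` is obtained from `A_w` by deleting the first row and the `(r_1+1)`-st column,
and the ranks of corresponding submatrices compare as stated. -/
theorem stmt12 (m : ℕ) (w : Equiv.Perm (Fin (m + 1))) (w' : Equiv.Perm (Fin m))
    (hww' : ∀ j : Fin m, rvecS w' j = rvecS w j.succ)
    (A : Matrix (Fin (m + 2)) (Fin (m + 2)) ℂ)
    (hA : ∀ i c, A i c ≠ 0 ↔ AwSupp w i c) :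
    (∀ i c, delMat (rvecS w 0) A i c ≠ 0 ↔ AwSupp w' i c) ∧
    ∀ S : Finset (Fin (m + 1)),
      (∀ j, j ≤ rvecS w 0 →
        rkSub (delMat (rvecS w 0) A) S j = rkSub A (S.image Fin.succ) j) ∧
      (∀ j, rvecS w 0 ≤ j →
        rkSub (delMat (rvecS w 0) A) S j = rkSub A (S.image Fin.succ) (j + 1)) := by
  have hw := inv_comp_succ_eq_succAbove hww'
  have hr : rvecS w 0 = ((w⁻¹ 0).succ : ℕ) := by rw [rvecS_zero, Fin.val_succ]
  have hcol : ∀ i : Fin (m + 1), A i.succ (w⁻¹ 0).succ = 0 :=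
    fun i => not_not.1 fun h => not_awSupp_succ hw i ((hA _ _).1 h)
  rw [hr]
  refine ⟨fun i c => by rw [delMat_apply, hA, awSupp_succ_succAbove_iff hw], fun S => ⟨?_, ?_⟩⟩
  · intro j hj
    refine rkSub_delMat _ A hcol S fun c => ?_
    rw [Fin.val_succAbove_eq_succAboveNat, succAboveNat_lt_iff_of_le hj]
  · intro j hj
    refine rkSub_delMat _ A hcol S fun c => ?_
    rw [Fin.val_succAbove_eq_succAboveNat, succAboveNat_lt_add_one_iff_of_le hj]
end

section
/- The matrix A_w is invertible whenever all entries corresponding to the symbol ⋆_2 are nonzero: its columns can be permuted so that the ⋆_2 entries lie on the diagonal and the resulting matrix is triangular; consequently det(A_w) = ± the product of the ⋆_2 entries up to sign, and in particular is nonzero. -/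
open Equiv

namespace Matrix

variable {n R : Type*} [Fintype n] [DecidableEq n] [LinearOrder n] [CommRing R]

theorem det_eq_sign_mul_prod_of_isUpperTriangular_submatrix (A : Matrix n n R) (σ : Perm n)
    (h : (A.submatrix id σ).IsUpperTriangular) :
    A.det = Perm.sign σ * ∏ i, A i (σ i) := by
  have hperm : ∏ i, A i (σ i) = Perm.sign σ * A.det := by
    simpa [det_of_isUpperTriangular h] using det_permute' σ A
  rw [hperm, ← mul_assoc, ← Int.cast_mul, ← Units.val_mul, Int.units_mul_self, Units.val_one,
    Int.cast_one, one_mul]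

theorem det_eq_prod_or_eq_neg_prod_of_isUpperTriangular_submatrix (A : Matrix n n R)
    (σ : Perm n) (h : (A.submatrix id σ).IsUpperTriangular) :
    A.det = ∏ i, A i (σ i) ∨ A.det = -∏ i, A i (σ i) := by
  rw [det_eq_sign_mul_prod_of_isUpperTriangular_submatrix A σ h]
  rcases Int.units_eq_one_or (Perm.sign σ) with hs | hs <;> simp [hs]

end Matrix

section star2

variable {m : ℕ} (w : Perm (Fin m))

@[simp]
theorem star2_castSucc (k : Fin m) : star2 w k.castSucc = (w⁻¹ k).succ := by
  simp [star2]

@[simp]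
theorem star2_last : star2 w (Fin.last m) = 0 := by
  simp [star2]

theorem star2_injective : Function.Injective (star2 w) := by
  intro i i' h
  induction i using Fin.lastCases <;> induction i' using Fin.lastCases <;>
    simp_all [Fin.succ_ne_zero, (Fin.succ_ne_zero _).symm]

theorem star2_bijective : Function.Bijective (star2 w) :=
  Finite.injective_iff_bijective.mp (star2_injective w)

theorem star1col_avoids_star2_or_eq_zero (i : Fin (m + 1)) :
    (∀ i' < i, (star2 w i' : ℕ) ≠ star1col w i) ∨ star1col w i = 0 := by
  unfold star1col
  rcases Finset.eq_empty_or_nonempty ((Finset.range (star2 w i : ℕ)).filter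
      (fun c => ∀ i' : Fin (m + 1), i' < i → (star2 w i' : ℕ) ≠ c)) with he | hne
  · exact Or.inr (by simp [he])
  · obtain ⟨c, hc, hsup⟩ := Finset.exists_mem_eq_sup _ hne id
    exact Or.inl (hsup ▸ (Finset.mem_filter.mp hc).2)

theorem star2_val_ne_star1col_of_lt {i j : Fin (m + 1)} (hji : j < i) :
    (star2 w j : ℕ) ≠ star1col w i := by
  rcases star1col_avoids_star2_or_eq_zero w i with havoid | hzero
  · exact havoid j hji
  -- an empty `sup` gives column 0, which is the `⋆₂` column of the last row only
  · induction j using Fin.lastCases with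
    | last => exact absurd hji (not_lt.mpr (Fin.le_last i))
    | cast k => simp [hzero]

theorem not_awSupp_star2_of_lt {i j : Fin (m + 1)} (hji : j < i) :
    ¬ AwSupp w i (star2 w j) := by
  rintro (h | ⟨-, h⟩)
  · exact hji.ne (star2_injective w h)
  · exact star2_val_ne_star1col_of_lt w hji h

end star2

/-- If all `⋆₂` entries of a matrix with the support pattern of `A_w` are nonzero, then
its columns may be permuted so that the `⋆₂` entries lie on the diagonal and the result
is upper triangular; consequently `det = ±` the product of the `⋆₂` entries, and in
particular the matrix is invertible. -/
theorem stmt13 (m : ℕ) (w : Equiv.Perm (Fin m))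
    (A : Matrix (Fin (m + 1)) (Fin (m + 1)) ℂ)
    (hzero : ∀ i c, ¬ AwSupp w i c → A i c = 0)
    (hstar2 : ∀ i, A i (star2 w i) ≠ 0) :
    (∃ σ : Equiv.Perm (Fin (m + 1)), (∀ i, σ i = star2 w i) ∧
      ∀ i j : Fin (m + 1), j < i → A i (σ j) = 0) ∧
    (A.det = ∏ i, A i (star2 w i) ∨ A.det = - ∏ i, A i (star2 w i)) ∧
    A.det ≠ 0 := by
  set σ : Perm (Fin (m + 1)) := Equiv.ofBijective _ (star2_bijective w)
  have hσ : ∀ i, σ i = star2 w i := fun _ => rfl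
  have htri : ∀ i j : Fin (m + 1), j < i → A i (σ j) = 0 := fun i j hji =>
    hzero i _ (not_awSupp_star2_of_lt w hji)
  have hdet := Matrix.det_eq_prod_or_eq_neg_prod_of_isUpperTriangular_submatrix A σ htri
  have hprod : ∏ i, A i (star2 w i) ≠ 0 := Finset.prod_ne_zero_iff.mpr fun i _ => hstar2 i
  refine ⟨⟨σ, hσ, htri⟩, hdet, ?_⟩
  rcases hdet with h | h <;> rw [h]
  · exact hprod
  · exact neg_ne_zero.mpr hprod
end
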